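/- arXiv:2308.05079 — 4 statements merged into one kernel-verified Lean document; each statement's English description precedes it below -/
import Mathlib

section
/- For every natural number l ≥ 1 and every natural number M, Σ_{m=0}^{⌊l/2⌋ - M} 2^{-l}·C(l,m) ≤ exp(-2M²/l), where the sum is zero if ⌊l/2⌋ < M. -/
/-- Chernoff–Hoeffding tail bound for the symmetric binomial distribution:
`Σ_{m=0}^{⌊l/2⌋-M} 2^{-l} C(l,m) ≤ exp(-2M²/l)` for `l ≥ 1`, where the sum is over all
`m` with `m ≤ ⌊l/2⌋ - M` (an empty sum when `⌊l/2⌋ < M`). -/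
theorem stmt_9 (l M : ℕ) (hl : 1 ≤ l) :
    ∑ m ∈ (Finset.range (l + 1)).filter
        (fun m : ℕ => (m : ℤ) ≤ ((l / 2 : ℕ) : ℤ) - (M : ℤ)),
      ((2 : ℝ) ^ l)⁻¹ * (l.choose m : ℝ)
      ≤ Real.exp (-2 * (M : ℝ) ^ 2 / (l : ℝ)) := by
  have hl0 : (0 : ℝ) < l := by exact_mod_cast hl
  set t : ℝ := 4 * M / l with ht_def
  have ht : 0 ≤ t := by positivity
  set k : ℝ := ((l / 2 : ℕ) : ℝ) - M with hk_def
  have step1 :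
      ∑ m ∈ (Finset.range (l + 1)).filter
          (fun m : ℕ => (m : ℤ) ≤ ((l / 2 : ℕ) : ℤ) - (M : ℤ)),
        ((2 : ℝ) ^ l)⁻¹ * (l.choose m : ℝ)
      ≤ ∑ m ∈ Finset.range (l + 1),
          ((2 : ℝ) ^ l)⁻¹ * (l.choose m : ℝ) * Real.exp (t * (k - m)) := by
    refine le_trans (Finset.sum_le_sum (fun m hm => ?_))
      (Finset.sum_le_sum_of_subset_of_nonneg (Finset.filter_subset _ _)
        (fun m _ _ => by positivity))
    have hm' : (m : ℝ) ≤ k := by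
      simp only [Finset.mem_filter] at hm
      have h2 := hm.2
      rw [hk_def]
      exact_mod_cast h2
    have hexp : 1 ≤ Real.exp (t * (k - m)) :=
      Real.one_le_exp (by nlinarith)
    exact le_mul_of_one_le_right (by positivity) hexp
  have step2 :
      ∑ m ∈ Finset.range (l + 1),
          ((2 : ℝ) ^ l)⁻¹ * (l.choose m : ℝ) * Real.exp (t * (k - m))
      = ((2 : ℝ) ^ l)⁻¹ * Real.exp (t * k) * (Real.exp (-t) + 1) ^ l := by
    rw [add_pow, Finset.mul_sum]
    refine Finset.sum_congr rfl (fun m hm => ?_)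
    rw [show t * (k - m) = t * k + (m : ℕ) * (-t) by ring,
      Real.exp_add, Real.exp_nat_mul]
    simp only [one_pow]
    ring
  have hkle : k ≤ (l : ℝ) / 2 - M := by
    rw [hk_def]
    have := Nat.cast_div_le (α := ℝ) (m := l) (n := 2)
    simp at this
    linarith
  have step3 :
      ((2 : ℝ) ^ l)⁻¹ * Real.exp (t * k) * (Real.exp (-t) + 1) ^ l
      ≤ Real.exp (-t * M) * Real.cosh (t / 2) ^ l := by
    have h1 : Real.exp (t * k) ≤ Real.exp (t * ((l : ℝ) / 2 - M)) := by
      apply Real.exp_le_exp.2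
      nlinarith
    have h2 : Real.exp (t * ((l : ℝ) / 2 - M))
        = Real.exp (-t * M) * Real.exp (t / 2) ^ l := by
      rw [← Real.exp_nat_mul, ← Real.exp_add]
      ring_nf
    have h3 : ((2 : ℝ) ^ l)⁻¹ * Real.exp (t / 2) ^ l * (Real.exp (-t) + 1) ^ l
        = Real.cosh (t / 2) ^ l := by
      rw [← inv_pow, ← mul_pow, ← mul_pow]
      congr 1
      rw [Real.cosh_eq]
      rw [show -(t / 2) = t / 2 + -t by ring, Real.exp_add]
      ring
    calc ((2 : ℝ) ^ l)⁻¹ * Real.exp (t * k) * (Real.exp (-t) + 1) ^ l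
        ≤ ((2 : ℝ) ^ l)⁻¹ * Real.exp (t * ((l : ℝ) / 2 - M)) * (Real.exp (-t) + 1) ^ l := by
          have hp : (0 : ℝ) ≤ (Real.exp (-t) + 1) ^ l := by positivity
          have h2l : (0 : ℝ) ≤ ((2 : ℝ) ^ l)⁻¹ := by positivity
          exact mul_le_mul_of_nonneg_right (mul_le_mul_of_nonneg_left h1 h2l) hp
      _ = Real.exp (-t * M) * (((2 : ℝ) ^ l)⁻¹ * Real.exp (t / 2) ^ l * (Real.exp (-t) + 1) ^ l) := by
          rw [h2]; ring
      _ = Real.exp (-t * M) * Real.cosh (t / 2) ^ l := by rw [h3]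
  have step4 : Real.exp (-t * M) * Real.cosh (t / 2) ^ l
      ≤ Real.exp (-2 * (M : ℝ) ^ 2 / (l : ℝ)) := by
    have hc : Real.cosh (t / 2) ^ l ≤ Real.exp ((t / 2) ^ 2 / 2) ^ l :=
      pow_le_pow_left₀ (Real.cosh_pos _).le (Real.cosh_le_exp_half_sq _) _
    have : Real.exp (-t * M) * Real.exp ((t / 2) ^ 2 / 2) ^ l
        = Real.exp (-2 * (M : ℝ) ^ 2 / (l : ℝ)) := by
      rw [← Real.exp_nat_mul, ← Real.exp_add]
      congr 1
      rw [ht_def]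
      field_simp
      ring
    calc Real.exp (-t * M) * Real.cosh (t / 2) ^ l
        ≤ Real.exp (-t * M) * Real.exp ((t / 2) ^ 2 / 2) ^ l :=
          mul_le_mul_of_nonneg_left hc (Real.exp_nonneg _)
      _ = _ := this
  calc _ ≤ _ := step1
    _ = _ := step2
    _ ≤ _ := step3
    _ ≤ _ := step4
end

section
/- Let ρ₀ and ρ₁ be density matrices on a finite-dimensional complex Hilbert space and let Π be a Hermitian matrix with 0 ≤ Π ≤ I (i.e., Π and I - Π are positive semidefinite). Then Tr(Πρ₀) - Tr(Πρ₁) ≤ (1/2)·Tr|ρ₀ - ρ₁|. (Holevo–Helstrom bound: the bias of any two-outcome measurement is at most the trace distance.) -/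
open scoped ComplexOrder

/-! Diagonalize `ρ₀ - ρ₁ = U diag(λ) U*`. Then `Tr(P(ρ₀ - ρ₁)) = ∑ λⱼ qⱼ` with `qⱼ = (U*PU)ⱼⱼ ∈ [0, 1]`,
which is at most `∑ λⱼ⁺`; since `∑ λⱼ = Tr(ρ₀ - ρ₁) = 0`, this equals `½ ∑ |λⱼ|`. -/

theorem mul_le_half_abs_add_of_nonneg_of_le_one {a q : ℝ} (h0 : 0 ≤ q) (h1 : q ≤ 1) :
    a * q ≤ (|a| + a) / 2 := by
  rcases le_or_gt 0 a with ha | ha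
  · rw [abs_of_nonneg ha]; nlinarith
  · rw [abs_of_neg ha]; nlinarith

theorem Finset.sum_mul_le_half_sum_abs_of_sum_eq_zero {ι : Type*} (s : Finset ι) {a q : ι → ℝ}
    (ha : ∑ i ∈ s, a i = 0) (h0 : ∀ i ∈ s, 0 ≤ q i) (h1 : ∀ i ∈ s, q i ≤ 1) :
    ∑ i ∈ s, a i * q i ≤ 1 / 2 * ∑ i ∈ s, |a i| :=
  calc ∑ i ∈ s, a i * q i
      ≤ ∑ i ∈ s, (|a i| + a i) / 2 :=
        Finset.sum_le_sum fun i hi => mul_le_half_abs_add_of_nonneg_of_le_one (h0 i hi) (h1 i hi)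
    _ = 1 / 2 * ∑ i ∈ s, |a i| := by
        rw [← Finset.sum_div, Finset.sum_add_distrib, ha]; ring

namespace Matrix

variable {𝕜 n : Type*} [RCLike 𝕜]

theorem PosSemidef.re_diag_nonneg {Q : Matrix n n 𝕜} (hQ : Q.PosSemidef) (j : n) :
    0 ≤ RCLike.re (Q j j) :=
  (RCLike.nonneg_iff.mp hQ.diag_nonneg).1

variable [DecidableEq n]

theorem re_diag_le_one_of_posSemidef_one_sub {Q : Matrix n n 𝕜} (hQ : (1 - Q).PosSemidef)
    (j : n) : RCLike.re (Q j j) ≤ 1 := by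
  simpa [one_apply_eq] using hQ.re_diag_nonneg j

variable [Fintype n]

theorem posSemidef_one_sub_star_mul_mul {P U : Matrix n n 𝕜} (hU : U ∈ unitaryGroup n 𝕜)
    (hP : (1 - P).PosSemidef) : (1 - star U * P * U).PosSemidef := by
  have h := hP.conjTranspose_mul_mul_same U
  rwa [Matrix.mul_sub, Matrix.sub_mul, Matrix.mul_one, ← star_eq_conjTranspose,
    (mem_unitaryGroup_iff').mp hU] at h

namespace IsHermitian

variable {A : Matrix n n 𝕜} (hA : A.IsHermitian)

theorem trace_mul_eq_sum_eigenvalues_mul (P : Matrix n n 𝕜) :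
    (P * A).trace = ∑ j, (hA.eigenvalues j : 𝕜) *
      (star (hA.eigenvectorUnitary : Matrix n n 𝕜) * P * hA.eigenvectorUnitary) j j := by
  set U : Matrix n n 𝕜 := (hA.eigenvectorUnitary : Matrix n n 𝕜)
  conv_lhs => rw [hA.spectral_theorem, Unitary.conjStarAlgAut_apply]
  calc (P * (U * diagonal (RCLike.ofReal ∘ hA.eigenvalues) * star U)).trace
      = (star U * P * U * diagonal (RCLike.ofReal ∘ hA.eigenvalues)).trace := by
        rw [← Matrix.mul_assoc, Matrix.trace_mul_cycle, Matrix.mul_assoc _ P, Matrix.mul_assoc,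
          Matrix.mul_assoc]
    _ = _ := by simp [Matrix.trace, Matrix.mul_diagonal, mul_comm]

theorem re_trace_mul_le_half_sum_abs_eigenvalues (hA0 : A.trace = 0) {P : Matrix n n 𝕜}
    (hP : P.PosSemidef) (hP' : (1 - P).PosSemidef) :
    RCLike.re (P * A).trace ≤ 1 / 2 * ∑ j, |hA.eigenvalues j| := by
  have hQ := hP.conjTranspose_mul_mul_same (hA.eigenvectorUnitary : Matrix n n 𝕜)
  rw [← star_eq_conjTranspose] at hQ
  have hQ' := posSemidef_one_sub_star_mul_mul hA.eigenvectorUnitary.2 hP'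
  have hsum : ∑ j, hA.eigenvalues j = 0 := by
    simpa using congrArg RCLike.re (hA.trace_eq_sum_eigenvalues.symm.trans hA0)
  rw [hA.trace_mul_eq_sum_eigenvalues_mul, map_sum]
  simp only [RCLike.re_ofReal_mul]
  exact Finset.univ.sum_mul_le_half_sum_abs_of_sum_eq_zero hsum
    (fun j _ => hQ.re_diag_nonneg j) (fun j _ => re_diag_le_one_of_posSemidef_one_sub hQ' j)

end IsHermitian

end Matrix

theorem stmt_15_general {n : Type*} [Fintype n] [DecidableEq n] (ρ₀ ρ₁ P : Matrix n n ℂ)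
    (t₀ : ρ₀.trace = 1) (t₁ : ρ₁.trace = 1)
    (hP : P.PosSemidef) (hP' : ((1 : Matrix n n ℂ) - P).PosSemidef)
    (hΔ : (ρ₀ - ρ₁).IsHermitian) :
    ((P * ρ₀).trace - (P * ρ₁).trace).re ≤ (1 / 2 : ℝ) * ∑ j, |hΔ.eigenvalues j| := by
  have hΔ0 : (ρ₀ - ρ₁).trace = 0 := by rw [Matrix.trace_sub, t₀, t₁, sub_self]
  rw [← Matrix.trace_sub, ← Matrix.mul_sub]
  exact hΔ.re_trace_mul_le_half_sum_abs_eigenvalues hΔ0 hP hP'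

/-- Holevo–Helstrom bound: for density matrices `ρ₀, ρ₁` and any measurement operator
`Π` with `0 ≤ Π ≤ I`, the bias satisfies
`Tr(Πρ₀) - Tr(Πρ₁) ≤ (1/2)Tr|ρ₀-ρ₁|`, where `Tr|ρ₀-ρ₁|` is the sum of the absolute
values of the eigenvalues of the Hermitian matrix `ρ₀ - ρ₁`. -/
theorem stmt_15 {n : Type*} [Fintype n] [DecidableEq n] (ρ₀ ρ₁ P : Matrix n n ℂ)
    (h₀ : ρ₀.PosSemidef) (h₁ : ρ₁.PosSemidef)
    (t₀ : ρ₀.trace = 1) (t₁ : ρ₁.trace = 1)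
    (hP : P.PosSemidef) (hP' : ((1 : Matrix n n ℂ) - P).PosSemidef)
    (hΔ : (ρ₀ - ρ₁).IsHermitian) :
    ((P * ρ₀).trace - (P * ρ₁).trace).re ≤ (1 / 2 : ℝ) * ∑ j, |hΔ.eigenvalues j| :=
  stmt_15_general ρ₀ ρ₁ P t₀ t₁ hP hP' hΔ
end

section
/- For every natural number k ≥ 1 and every x ∈ [-1,1], writing Φ ∈ ℝ^k with φ₁ = (1-k)π/2 and φ_j = π/2 for 2 ≤ j ≤ k, the (1,1) entry of the matrix product ∏_{j=1}^{k} ( [[e^{iφ_j}, 0],[0, e^{-iφ_j}]] · [[x, √(1-x²)],[√(1-x²), -x]] ) equals T_k(x), the k-th Chebyshev polynomial of the first kind. -/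
/-!
Write `x = cos θ`. The phase `π/2` turns the signal matrix into `i` times the rotation by `θ`,
and phases add, so the `j`-th factor is the phase `φ_j - π/2` times `i R(θ)`. That shift is `0`
for `j ≥ 2` and `-kπ/2` for `j = 1`, so the product is the phase `-kπ/2` times `i^k R(kθ)`,
whose `(1,1)` entry is `cos kθ = T_k(x)`.
-/

open Polynomial

open Complex in
noncomputable def phaseMatrix (φ : ℝ) : Matrix (Fin 2) (Fin 2) ℂ :=
  !![exp (I * φ), 0; 0, exp (-(I * φ))]

noncomputable def signalMatrix (x : ℝ) : Matrix (Fin 2) (Fin 2) ℂ :=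
  !![(x : ℂ), ((Real.sqrt (1 - x ^ 2) : ℝ) : ℂ); ((Real.sqrt (1 - x ^ 2) : ℝ) : ℂ), (-x : ℂ)]

noncomputable def rotationMatrix (θ : ℝ) : Matrix (Fin 2) (Fin 2) ℂ :=
  !![(Real.cos θ : ℂ), (Real.sin θ : ℂ); -(Real.sin θ : ℂ), (Real.cos θ : ℂ)]

lemma phaseMatrix_zero : phaseMatrix 0 = 1 := by
  simp [phaseMatrix, Matrix.one_fin_two]

lemma phaseMatrix_add (a b : ℝ) : phaseMatrix (a + b) = phaseMatrix a * phaseMatrix b := by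
  simp only [phaseMatrix, Matrix.mul_fin_two, Complex.ofReal_add, mul_add, neg_add,
    Complex.exp_add]
  simp only [mul_zero, add_zero, zero_mul, zero_add]

lemma phaseMatrix_mul_apply_zero_zero (φ : ℝ) (A : Matrix (Fin 2) (Fin 2) ℂ) :
    (phaseMatrix φ * A) 0 0 = Complex.exp (Complex.I * φ) * A 0 0 := by
  simp [phaseMatrix, Matrix.mul_apply, Fin.sum_univ_two]

lemma rotationMatrix_add (a b : ℝ) :
    rotationMatrix (a + b) = rotationMatrix a * rotationMatrix b := by
  simp only [rotationMatrix, Matrix.mul_fin_two, Real.cos_add, Real.sin_add]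
  push_cast
  ring_nf

lemma rotationMatrix_pow (θ : ℝ) (n : ℕ) : rotationMatrix θ ^ n = rotationMatrix (n * θ) := by
  induction n with
  | zero => simp [rotationMatrix, Matrix.one_fin_two]
  | succ n ih => rw [pow_succ, ih, ← rotationMatrix_add, Nat.cast_succ, add_one_mul]

lemma phaseMatrix_pi_div_two_mul_signalMatrix {x : ℝ} (hx : x ∈ Set.Icc (-1 : ℝ) 1) :
    phaseMatrix (Real.pi / 2) * signalMatrix x = Complex.I • rotationMatrix (Real.arccos x) := by
  rw [rotationMatrix, Real.cos_arccos hx.1 hx.2, Real.sin_arccos]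
  have hI : Complex.exp (Complex.I * ((Real.pi / 2 : ℝ) : ℂ)) = Complex.I := by
    rw [mul_comm]; push_cast; exact Complex.exp_pi_div_two_mul_I
  simp only [phaseMatrix, signalMatrix, Matrix.mul_fin_two, Complex.exp_neg, hI, Complex.inv_I]
  ext i j
  fin_cases i <;> fin_cases j <;> simp

lemma List.prod_map_range_succ_eq_mul_pow {M : Type*} [Monoid M] {f : ℕ → M} {a b : M}
    (h0 : f 0 = a * b) (hsucc : ∀ j, f (j + 1) = b) (n : ℕ) :
    ((List.range (n + 1)).map f).prod = a * b ^ (n + 1) := by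
  simp [List.prod_range_succ', h0, hsucc, pow_succ', mul_assoc]

lemma exp_neg_mul_nat_mul_pi_div_two_mul_I_pow (n : ℕ) :
    Complex.exp (Complex.I * ((-(n * Real.pi / 2) : ℝ) : ℂ)) * Complex.I ^ n = 1 := by
  have hI : Complex.I ^ n = Complex.exp (n * (Real.pi / 2 * Complex.I)) := by
    rw [Complex.exp_nat_mul, Complex.exp_pi_div_two_mul_I]
  rw [hI, ← Complex.exp_add, ← Complex.exp_zero]
  congr 1
  push_cast
  ring

lemma phaseMatrix_mul_pow_apply_zero_zero (n : ℕ) (θ : ℝ) :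
    (phaseMatrix (-(n * Real.pi / 2)) * (Complex.I • rotationMatrix θ) ^ n) 0 0
      = Real.cos (n * θ) := by
  rw [_root_.smul_pow, rotationMatrix_pow, phaseMatrix_mul_apply_zero_zero, Matrix.smul_apply,
    smul_eq_mul, ← mul_assoc, exp_neg_mul_nat_mul_pi_div_two_mul_I_pow, one_mul]
  simp [rotationMatrix]

theorem stmt_18_general (k : ℕ) (x : ℝ) (hx : x ∈ Set.Icc (-1 : ℝ) 1) :
    ∀ φ : ℕ → ℝ,
      (∀ j, φ j = if j = 0 then (1 - (k : ℝ)) * Real.pi / 2 else Real.pi / 2) →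
      (((List.range k).map (fun j =>
          (!![Complex.exp (Complex.I * (φ j)), 0;
              0, Complex.exp (-(Complex.I * (φ j)))] : Matrix (Fin 2) (Fin 2) ℂ) *
          (!![(x : ℂ), ((Real.sqrt (1 - x ^ 2) : ℝ) : ℂ);
              ((Real.sqrt (1 - x ^ 2) : ℝ) : ℂ), (-x : ℂ)] : Matrix (Fin 2) (Fin 2) ℂ))).prod)
          0 0
        = (((Chebyshev.T ℝ k).eval x : ℝ) : ℂ) := by
  intro φ hφ
  change ((List.range k).map fun j => phaseMatrix (φ j) * signalMatrix x).prod 0 0 = _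
  have hfactor (j : ℕ) : phaseMatrix (φ j) * signalMatrix x
      = phaseMatrix (φ j - Real.pi / 2) * (Complex.I • rotationMatrix (Real.arccos x)) := by
    rw [← phaseMatrix_pi_div_two_mul_signalMatrix hx, ← mul_assoc, ← phaseMatrix_add,
      sub_add_cancel]
  have hT : (Chebyshev.T ℝ k).eval x = Real.cos (k * Real.arccos x) := by
    simpa [Real.cos_arccos hx.1 hx.2] using Chebyshev.T_real_cos (Real.arccos x) k
  rw [hT]
  cases k with
  | zero => simp
  | succ m =>
    rw [List.prod_map_range_succ_eq_mul_pow (a := phaseMatrix (-((m + 1 : ℕ) * Real.pi / 2)))]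
    · exact phaseMatrix_mul_pow_apply_zero_zero (m + 1) _
    · rw [hfactor, hφ, if_pos rfl]
      congr 2
      push_cast
      ring
    · intro j
      rw [hfactor, hφ, if_neg j.succ_ne_zero, sub_self, phaseMatrix_zero, one_mul]

/-- Quantum signal processing representation of Chebyshev polynomials: for `k ≥ 1`,
`x ∈ [-1,1]`, with phases `φ₁ = (1-k)π/2` and `φ_j = π/2` for `2 ≤ j ≤ k`, the `(1,1)`
entry of `∏_{j=1}^{k} ([[e^{iφ_j},0],[0,e^{-iφ_j}]]·[[x,√(1-x²)],[√(1-x²),-x]])`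
equals `T_k(x)`, the `k`-th Chebyshev polynomial of the first kind. -/
theorem stmt_18 (k : ℕ) (hk : 1 ≤ k) (x : ℝ) (hx : x ∈ Set.Icc (-1 : ℝ) 1) :
    ∀ φ : ℕ → ℝ,
      (∀ j, φ j = if j = 0 then (1 - (k : ℝ)) * Real.pi / 2 else Real.pi / 2) →
      (((List.range k).map (fun j =>
          (!![Complex.exp (Complex.I * (φ j)), 0;
              0, Complex.exp (-(Complex.I * (φ j)))] : Matrix (Fin 2) (Fin 2) ℂ) *
          (!![(x : ℂ), ((Real.sqrt (1 - x ^ 2) : ℝ) : ℂ);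
              ((Real.sqrt (1 - x ^ 2) : ℝ) : ℂ), (-x : ℂ)] : Matrix (Fin 2) (Fin 2) ℂ))).prod)
          0 0
        = (((Chebyshev.T ℝ k).eval x : ℝ) : ℂ) :=
  stmt_18_general k x hx
end

section
/- Let U be a unitary on a finite-dimensional complex Hilbert space and let |ψ₀⟩, |ψ₁⟩ be orthonormal vectors with U|0̄⟩ = sin(θ)|ψ₀⟩ + cos(θ)|ψ₁⟩ for some real θ. Define the Grover operator G = -U(I - 2|0̄⟩⟨0̄|)U†(I - 2|ψ₀⟩⟨ψ₀|). Then for every natural number j ≥ 0, G^j U |0̄⟩ = sin((2j+1)θ)|ψ₀⟩ + cos((2j+1)θ)|ψ₁⟩. In particular, if sin(θ) = 1/2 then G·U|0̄⟩ = |ψ₀⟩. -/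
/-!
Parametrize the real circle in span{ψ₀, ψ₁} by `α ↦ sin α • ψ₀ + cos α • ψ₁`. On it, the
reflection `I - 2|u⟩⟨u|` along the point of angle `β` sends angle `α` to angle `2β - α`, up to
sign. Conjugating by `U` turns `U(I - 2|0̄⟩⟨0̄|)U†` into the reflection along `U|0̄⟩` (angle `θ`),
and `ψ₀` is the point of angle `π/2`, so `G` is the composite of two reflections: a rotation by
`2θ`.
-/

section

variable {𝕜 E : Type*} [RCLike 𝕜] [NormedAddCommGroup E] [InnerProductSpace 𝕜 E]

variable (𝕜) in
def householder (u v : E) : E := v - (2 : 𝕜) • inner 𝕜 u v • u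

theorem LinearIsometryEquiv.map_householder_symm (U : E ≃ₗᵢ[𝕜] E) (u w : E) :
    U (householder 𝕜 u (U.symm w)) = householder 𝕜 (U u) w := by
  rw [householder, householder, ← U.inner_map_map, U.apply_symm_apply]
  simp only [map_sub, map_smul, U.apply_symm_apply]

variable (𝕜) in
def groverOp (U : E ≃ₗᵢ[𝕜] E) (z ψ₀ v : E) : E :=
  -U (householder 𝕜 z (U.symm (householder 𝕜 ψ₀ v)))

variable (𝕜) in
noncomputable def planeVec (ψ₀ ψ₁ : E) (α : ℝ) : E :=
  (Real.sin α : 𝕜) • ψ₀ + (Real.cos α : 𝕜) • ψ₁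

variable {ψ₀ ψ₁ : E}

theorem planeVec_pi_div_two : planeVec 𝕜 ψ₀ ψ₁ (Real.pi / 2) = ψ₀ := by
  simp [planeVec]

theorem planeVec_eq_left_of_sin_eq_one {α : ℝ} (h : Real.sin α = 1) :
    planeVec 𝕜 ψ₀ ψ₁ α = ψ₀ := by
  have hcos : Real.cos α = 0 := by nlinarith [Real.sin_sq_add_cos_sq α]
  simp [planeVec, h, hcos]

variable (hψ₀ : ‖ψ₀‖ = 1) (hψ₁ : ‖ψ₁‖ = 1) (horth : inner 𝕜 ψ₀ ψ₁ = 0)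
include hψ₀ hψ₁ horth

theorem inner_planeVec_planeVec (β α : ℝ) :
    inner 𝕜 (planeVec 𝕜 ψ₀ ψ₁ β) (planeVec 𝕜 ψ₀ ψ₁ α) = (Real.cos (α - β) : 𝕜) := by
  have h10 : inner 𝕜 ψ₁ ψ₀ = 0 := by rw [← inner_conj_symm, horth, map_zero]
  simp only [planeVec, inner_add_left, inner_add_right, inner_smul_left, inner_smul_right,
    inner_self_eq_norm_sq_to_K, hψ₀, hψ₁, horth, h10, mul_zero, add_zero, RCLike.conj_ofReal,
    Real.cos_sub]
  push_cast
  ring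

theorem householder_planeVec (β α : ℝ) :
    householder 𝕜 (planeVec 𝕜 ψ₀ ψ₁ β) (planeVec 𝕜 ψ₀ ψ₁ α) =
      -planeVec 𝕜 ψ₀ ψ₁ (2 * β - α) := by
  have hsin : Real.sin (2 * β - α) = 2 * Real.cos (α - β) * Real.sin β - Real.sin α := by
    rw [show 2 * β - α = β - (α - β) by ring, Real.sin_sub, Real.sin_sub, Real.cos_sub]
    linear_combination -Real.sin α * Real.sin_sq_add_cos_sq β
  have hcos : Real.cos (2 * β - α) = 2 * Real.cos (α - β) * Real.cos β - Real.cos α := by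
    rw [show 2 * β - α = β - (α - β) by ring, Real.cos_sub, Real.sin_sub, Real.cos_sub]
    linear_combination -Real.cos α * Real.sin_sq_add_cos_sq β
  rw [householder, inner_planeVec_planeVec hψ₀ hψ₁ horth]
  simp only [planeVec, hsin, hcos]
  push_cast
  module

theorem householder_left_planeVec (α : ℝ) :
    householder 𝕜 ψ₀ (planeVec 𝕜 ψ₀ ψ₁ α) = planeVec 𝕜 ψ₀ ψ₁ (-α) := by
  nth_rw 1 [← planeVec_pi_div_two (𝕜 := 𝕜) (ψ₀ := ψ₀) (ψ₁ := ψ₁)]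
  rw [householder_planeVec hψ₀ hψ₁ horth, show 2 * (Real.pi / 2) - α = Real.pi - α by ring]
  simp only [planeVec, Real.sin_pi_sub, Real.cos_pi_sub, Real.sin_neg, Real.cos_neg]
  push_cast
  module

variable {U : E ≃ₗᵢ[𝕜] E} {z : E} {θ : ℝ} (hU : U z = planeVec 𝕜 ψ₀ ψ₁ θ)
include hU

theorem groverOp_planeVec (α : ℝ) :
    groverOp 𝕜 U z ψ₀ (planeVec 𝕜 ψ₀ ψ₁ α) = planeVec 𝕜 ψ₀ ψ₁ (α + 2 * θ) := by
  rw [groverOp, U.map_householder_symm, hU, householder_left_planeVec hψ₀ hψ₁ horth,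
    householder_planeVec hψ₀ hψ₁ horth, neg_neg, sub_neg_eq_add, add_comm]

theorem iterate_groverOp_planeVec (α : ℝ) (j : ℕ) :
    (groverOp 𝕜 U z ψ₀)^[j] (planeVec 𝕜 ψ₀ ψ₁ α) = planeVec 𝕜 ψ₀ ψ₁ (α + j * (2 * θ)) := by
  have hsemi : Function.Semiconj (planeVec 𝕜 ψ₀ ψ₁) (· + 2 * θ) (groverOp 𝕜 U z ψ₀) :=
    fun α => (groverOp_planeVec hψ₀ hψ₁ horth hU α).symm
  rw [← (hsemi.iterate_right j).eq, add_right_iterate_apply, nsmul_eq_mul]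

end

theorem stmt_19_general {H : Type*} [NormedAddCommGroup H] [InnerProductSpace ℂ H]
    (U : H ≃ₗᵢ[ℂ] H) (z ψ₀ ψ₁ : H) (θ : ℝ)
    (hψ₀ : ‖ψ₀‖ = 1) (hψ₁ : ‖ψ₁‖ = 1)
    (horth : (inner ℂ ψ₀ ψ₁ : ℂ) = 0)
    (hU : U z = (Real.sin θ : ℂ) • ψ₀ + (Real.cos θ : ℂ) • ψ₁)
    (G : H → H)
    (hG : ∀ v : H,
      G v = -(U ((U.symm (v - (2 : ℂ) • (inner ℂ ψ₀ v : ℂ) • ψ₀)) -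
        (2 : ℂ) • (inner ℂ z (U.symm (v - (2 : ℂ) • (inner ℂ ψ₀ v : ℂ) • ψ₀)) : ℂ) • z))) :
    (∀ j : ℕ, G^[j] (U z) =
        (Real.sin ((2 * j + 1) * θ) : ℂ) • ψ₀ + (Real.cos ((2 * j + 1) * θ) : ℂ) • ψ₁) ∧
    (Real.sin θ = 1 / 2 → G (U z) = ψ₀) := by
  replace hU : U z = planeVec ℂ ψ₀ ψ₁ θ := hU
  obtain rfl : G = groverOp ℂ U z ψ₀ := funext hG
  have hiter (j : ℕ) : (groverOp ℂ U z ψ₀)^[j] (U z) = planeVec ℂ ψ₀ ψ₁ ((2 * j + 1) * θ) := by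
    rw [hU, iterate_groverOp_planeVec hψ₀ hψ₁ horth hU]
    ring_nf
  refine ⟨hiter, fun hsin => ?_⟩
  have hsin3 : Real.sin ((2 * (1 : ℕ) + 1) * θ) = 1 := by
    rw [Nat.cast_one, show ((2 : ℝ) * 1 + 1) * θ = 3 * θ by ring, Real.sin_three_mul, hsin]
    norm_num
  exact (hiter 1).trans (planeVec_eq_left_of_sin_eq_one hsin3)

/-- Exact amplitude amplification: let `U` be a unitary on a finite-dimensional complex
Hilbert space, `z = |0̄⟩` a unit vector, and `ψ₀, ψ₁` orthonormal with
`U z = sin θ • ψ₀ + cos θ • ψ₁`.  With the Grover operator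
`G = -U(I - 2|0̄⟩⟨0̄|)U†(I - 2|ψ₀⟩⟨ψ₀|)`, for every `j ≥ 0`,
`G^j (U z) = sin((2j+1)θ) • ψ₀ + cos((2j+1)θ) • ψ₁`; in particular if `sin θ = 1/2` then
`G (U z) = ψ₀`. -/
theorem stmt_19 {H : Type*} [NormedAddCommGroup H] [InnerProductSpace ℂ H]
    [FiniteDimensional ℂ H] (U : H ≃ₗᵢ[ℂ] H) (z ψ₀ ψ₁ : H) (θ : ℝ)
    (hz : ‖z‖ = 1) (hψ₀ : ‖ψ₀‖ = 1) (hψ₁ : ‖ψ₁‖ = 1)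
    (horth : (inner ℂ ψ₀ ψ₁ : ℂ) = 0)
    (hU : U z = (Real.sin θ : ℂ) • ψ₀ + (Real.cos θ : ℂ) • ψ₁)
    (G : H → H)
    (hG : ∀ v : H,
      G v = -(U ((U.symm (v - (2 : ℂ) • (inner ℂ ψ₀ v : ℂ) • ψ₀)) -
        (2 : ℂ) • (inner ℂ z (U.symm (v - (2 : ℂ) • (inner ℂ ψ₀ v : ℂ) • ψ₀)) : ℂ) • z))) :
    (∀ j : ℕ, G^[j] (U z) =
        (Real.sin ((2 * j + 1) * θ) : ℂ) • ψ₀ + (Real.cos ((2 * j + 1) * θ) : ℂ) • ψ₁) ∧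
    (Real.sin θ = 1 / 2 → G (U z) = ψ₀) :=
  stmt_19_general U z ψ₀ ψ₁ θ hψ₀ hψ₁ horth hU G hG
end
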